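/- arXiv:1801.03590 — 3 statements merged into one kernel-verified Lean document; each statement's English description precedes it below -/
import Mathlib

section
/- Let D be a δ-biased distribution over {0,1}^n with δ < 1. Fix a coordinate i ∈ [n] and a bit b ∈ {0,1}, and let D' be the distribution of x ← D conditioned on x_i = b. Then the marginal distribution of D' on the coordinates in [n] \ {i} is (2δ/(1−δ))-biased; in particular it is 4δ-biased when δ ≤ 1/2. -/
open Finset

/-- conditioning a δ-biased distribution on the value of one coordinate yields a
distribution whose marginal on the remaining coordinates is (2δ/(1−δ))-biased; in particular it is
4δ-biased when δ ≤ 1/2. -/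
theorem conditioned_small_bias {n : ℕ} (D : (Fin n → Bool) → ℝ) (δ : ℝ) (hδ : δ < 1)
    (hDdist : (∀ x, 0 ≤ D x) ∧ ∑ x, D x = 1)
    (hbias : ∀ S : Finset (Fin n), S.Nonempty →
      |∑ x, D x * ∏ j ∈ S, (if x j then (-1 : ℝ) else 1)| ≤ δ)
    (i : Fin n) (b : Bool)
    (P : ℝ) (hP : P = ∑ x, (if x i = b then D x else 0))
    (D' : (Fin n → Bool) → ℝ)
    (hD' : ∀ x, D' x = (if x i = b then D x else 0) / P) :
    ∀ S : Finset (Fin n), S.Nonempty → i ∉ S →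
      |∑ x, D' x * ∏ j ∈ S, (if x j then (-1 : ℝ) else 1)| ≤ 2 * δ / (1 - δ) ∧
      (δ ≤ 1 / 2 → |∑ x, D' x * ∏ j ∈ S, (if x j then (-1 : ℝ) else 1)| ≤ 4 * δ) := by
  obtain ⟨hD0, hD1⟩ := hDdist
  intro S hS hiS
  set ε : ℝ := if b then -1 else 1 with hε
  have hεabs : |ε| = 1 := by cases b <;> simp [hε]
  have key : ∀ x : Fin n → Bool, (if x i = b then D x else 0)
      = (D x + ε * (D x * (if x i then (-1:ℝ) else 1))) / 2 := by
    intro x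
    cases b <;> cases h : x i <;> simp [hε, h] <;> ring
  have hB0 : |∑ x, D x * (if x i then (-1:ℝ) else 1)| ≤ δ := by
    have := hbias {i} (singleton_nonempty i)
    simpa using this
  have hA : |∑ x, D x * ∏ j ∈ S, (if x j then (-1 : ℝ) else 1)| ≤ δ := hbias S hS
  have hB : |∑ x, D x * ∏ j ∈ insert i S, (if x j then (-1 : ℝ) else 1)| ≤ δ :=
    hbias _ (insert_nonempty i S)
  have hδ0 : 0 ≤ δ := le_trans (abs_nonneg _) hA
  have hPform : P = (1 + ε * ∑ x, D x * (if x i then (-1:ℝ) else 1)) / 2 := by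
    rw [hP]
    simp_rw [key]
    rw [← Finset.sum_div, Finset.sum_add_distrib, ← Finset.mul_sum, hD1]
  have habsεB0 : |ε * ∑ x, D x * (if x i then (-1:ℝ) else 1)| ≤ δ := by
    rw [abs_mul, hεabs, one_mul]; exact hB0
  have hPlb : (1 - δ)/2 ≤ P := by
    rw [hPform]
    have := neg_abs_le (ε * ∑ x, D x * (if x i then (-1:ℝ) else 1))
    linarith
  have hPpos : 0 < P := lt_of_lt_of_le (by linarith) hPlb
  have expand : ∀ x, (if x i = b then D x else 0) * ∏ j ∈ S, (if x j then (-1 : ℝ) else 1)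
      = (D x * ∏ j ∈ S, (if x j then (-1 : ℝ) else 1)
        + ε * (D x * ∏ j ∈ insert i S, (if x j then (-1 : ℝ) else 1))) / 2 := by
    intro x
    rw [key, Finset.prod_insert hiS]
    ring
  have hN : ∑ x, D' x * ∏ j ∈ S, (if x j then (-1 : ℝ) else 1)
      = ((∑ x, D x * ∏ j ∈ S, (if x j then (-1 : ℝ) else 1))
        + ε * ∑ x, D x * ∏ j ∈ insert i S, (if x j then (-1 : ℝ) else 1)) / 2 / P := by
    simp_rw [hD', div_mul_eq_mul_div, ← Finset.sum_div]
    congr 1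
    simp_rw [expand]
    rw [← Finset.sum_div, Finset.sum_add_distrib, ← Finset.mul_sum]
  have hnum : |(∑ x, D x * ∏ j ∈ S, (if x j then (-1 : ℝ) else 1))
        + ε * ∑ x, D x * ∏ j ∈ insert i S, (if x j then (-1 : ℝ) else 1)| ≤ 2 * δ := by
    have h2 : |ε * ∑ x, D x * ∏ j ∈ insert i S, (if x j then (-1 : ℝ) else 1)| ≤ δ := by
      rw [abs_mul, hεabs, one_mul]; exact hB
    calc _ ≤ _ := abs_add_le _ _
      _ ≤ 2 * δ := by linarith
  have hmain : |∑ x, D' x * ∏ j ∈ S, (if x j then (-1 : ℝ) else 1)| ≤ 2 * δ / (1 - δ) := by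
    rw [hN, abs_div, abs_div, abs_of_pos hPpos, abs_of_pos (by norm_num : (0:ℝ) < 2)]
    rw [div_div, div_le_div_iff₀ (by nlinarith) (by linarith)]
    nlinarith [abs_nonneg ((∑ x, D x * ∏ j ∈ S, (if x j then (-1 : ℝ) else 1))
        + ε * ∑ x, D x * ∏ j ∈ insert i S, (if x j then (-1 : ℝ) else 1))]
  refine ⟨hmain, fun hhalf => hmain.trans ?_⟩
  rw [div_le_iff₀ (by linarith)]
  nlinarith
end

section
/- Let F = (F_1,...,F_M) be an ordered collection of k-CNFs and ℓ ≥ k. The total number of paths Π such that Π is a path of length exactly t in some tree T in the set CCDT_ℓ(F) of canonical common ℓ-partial decision trees for F is at most (2^{ℓ+k} · 2^{ℓ+k})^{⌈t/ℓ⌉} ≤ 16^{t+ℓ}. -/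
/-! Canonical (common partial) decision trees for collections of CNFs, and the bound on the number
of length-t paths in the trees of `CCDT_ℓ(F)`. -/

/-- A restriction: `none` denotes ∗. -/
abbrev Restr (n : ℕ) := Fin n → Option Bool

/-- A clause: a list of literals `(variable, sign)`. -/
abbrev Clause (n : ℕ) := List (Fin n × Bool)

/-- A CNF: an ordered list of clauses. -/
abbrev CNF (n : ℕ) := List (Clause n)

/-- A path: the ordered list of queried variables together with the answers received. -/
abbrev QPath (n : ℕ) := List (Fin n × Bool)

/-- Status of a clause under a restriction: `some true` = satisfied (identically 1),
`some false` = falsified (identically 0), `none` = undetermined. -/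
def clauseStatus {n : ℕ} (ρ : Restr n) (c : Clause n) : Option Bool :=
  if ∃ l ∈ c, ρ l.1 = some l.2 then some true
  else if ∀ l ∈ c, ρ l.1 = some (!l.2) then some false
  else none

/-- The surviving variables of a clause under a restriction, in order of first appearance. -/
def survivors {n : ℕ} (ρ : Restr n) (c : Clause n) : List (Fin n) :=
  ((c.map Prod.fst).filter fun i => ρ i = none).dedup

/-- Extend a restriction by the assignments recorded along a path. -/
def extendR {n : ℕ} (ρ : Restr n) (π : QPath n) : Restr n := fun i =>
  match π.find? (fun l => decide (l.1 = i)) with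
  | some l => some l.2
  | none => ρ i

/-- `CDTFullPath F ρ η` : `η` is a *full* path in the canonical decision tree `CDT(F ↾ ρ)`, i.e. a
path each of whose segments (in particular the final one) assigns all surviving variables of the
first not-identically-1 clause reached. -/
inductive CDTFullPath {n : ℕ} : CNF n → Restr n → QPath n → Prop
  | skip {c : Clause n} {F : CNF n} {ρ : Restr n} {η : QPath n} :
      clauseStatus ρ c = some true → CDTFullPath F ρ η → CDTFullPath (c :: F) ρ η
  | last {c : Clause n} {F : CNF n} {ρ : Restr n} (bs : List Bool) :
      clauseStatus ρ c = none → bs.length = (survivors ρ c).length →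
      CDTFullPath (c :: F) ρ ((survivors ρ c).zip bs)
  | step {c : Clause n} {F : CNF n} {ρ : Restr n} (bs : List Bool) {η' : QPath n} :
      clauseStatus ρ c = none → bs.length = (survivors ρ c).length →
      CDTFullPath (c :: F) (extendR ρ ((survivors ρ c).zip bs)) η' →
      CDTFullPath (c :: F) ρ ((survivors ρ c).zip bs ++ η')

/-- `CCDTPath ℓ k Fs ρ Π` : `Π` is a path through some tree in the set `CCDT_ℓ(Fs ↾ ρ)` of
canonical common ℓ-partial decision trees for the ordered collection `Fs` of k-CNFs. At each stage,
if the canonical decision tree of the first formula has depth ≤ ℓ (no full path longer than ℓ) the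
formula is discarded; otherwise a witnessing full path `η` of length between ℓ+1 and ℓ+k is chosen,
all its variables are queried (the path may stop partway through this block of queries), and the
construction recurses on the whole collection restricted by the answers received. -/
inductive CCDTPath {n : ℕ} (ℓ k : ℕ) : List (CNF n) → Restr n → QPath n → Prop
  | nil {ρ : Restr n} : CCDTPath ℓ k [] ρ []
  | short {F : CNF n} {Fs : List (CNF n)} {ρ : Restr n} {PP : QPath n} :
      (∀ η, CDTFullPath F ρ η → η.length ≤ ℓ) →
      CCDTPath ℓ k Fs ρ PP → CCDTPath ℓ k (F :: Fs) ρ PP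
  | partialSeg {F : CNF n} {Fs : List (CNF n)} {ρ : Restr n} (η : QPath n) (bs : List Bool) :
      CDTFullPath F ρ η → ℓ < η.length → η.length ≤ ℓ + k →
      bs.length ≤ η.length →
      CCDTPath ℓ k (F :: Fs) ρ (((η.map Prod.fst).take bs.length).zip bs)
  | fullSeg {F : CNF n} {Fs : List (CNF n)} {ρ : Restr n} (η : QPath n) (bs : List Bool)
      {PP' : QPath n} :
      CDTFullPath F ρ η → ℓ < η.length → η.length ≤ ℓ + k →
      bs.length = η.length →
      CCDTPath ℓ k (F :: Fs) (extendR ρ ((η.map Prod.fst).zip bs)) PP' →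
      CCDTPath ℓ k (F :: Fs) ρ ((η.map Prod.fst).zip bs ++ PP')

/-! Every such path is determined by a short binary code. For each stage it records a
self-delimiting code of the witnessing full path `η` of the canonical decision tree (a continuation
bit before each block of answers; blocks are nonempty, so at most `2|η| ≤ 2(ℓ+k) ≤ 4ℓ` bits),
followed by the answers along the path. Stages whose first formula is shallow cost nothing, since
shallowness is determined by what has been decoded so far. A completed stage costs at most three
bits per step of the path, and the last one at most `4ℓ` bits on top of its answers, so the code
has at most `3t + 4ℓ` bits and there are at most `2^(3t+4ℓ) ≤ 16^(t+ℓ)` paths. -/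

theorem zip_append_right_of_length_le {α β : Type*} {l : List α} {r s : List β}
    (h : l.length ≤ r.length) : l.zip (r ++ s) = l.zip r := by
  induction l generalizing r with
  | nil => simp
  | cons a l ih =>
    cases r with
    | nil => simp at h
    | cons b r => simp [ih (Nat.le_of_succ_le_succ h)]

theorem card_le_two_pow_of_decode {α : Type*} {p : α → Prop} (B : ℕ)
    (decode : List Bool → Option α)
    (hcode : ∀ a, p a → ∃ code : List Bool, code.length ≤ B ∧ ∀ r, decode (code ++ r) = some a) :
    Nat.card {a // p a} ≤ 2 ^ B := by
  choose code hlen hdec using hcode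
  let pad : {a // p a} → List.Vector Bool B := fun a =>
    ⟨code a.1 a.2 ++ List.replicate (B - (code a.1 a.2).length) false, by
      simp only [List.length_append, List.length_replicate]; have := hlen a.1 a.2; omega⟩
  have hpad : Function.Injective pad := fun a b hab => Subtype.ext <| Option.some_injective _ <| by
    rw [← hdec a.1 a.2, ← hdec b.1 b.2]
    exact congrArg (decode ∘ Subtype.val) hab
  calc Nat.card {a // p a} ≤ Nat.card (List.Vector Bool B) := Nat.card_le_card_of_injective _ hpad
    _ = 2 ^ B := by simp [Nat.card_eq_fintype_card, card_vector]

section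

variable {n : ℕ}

theorem survivors_ne_nil {ρ : Restr n} {c : Clause n} (h : clauseStatus ρ c = none) :
    survivors ρ c ≠ [] := by
  simp only [clauseStatus] at h
  split_ifs at h with hsat hfalsified
  obtain ⟨l, hl, hne⟩ := not_forall₂.mp hfalsified
  have hfree : ρ l.1 = none := by
    cases hρ : ρ l.1 with
    | none => rfl
    | some b => exact absurd ⟨l, hl, by cases b <;> cases hb : l.2 <;> simp_all⟩ hsat
  exact List.ne_nil_of_mem <|
    List.mem_dedup.mpr <| List.mem_filter.mpr ⟨List.mem_map_of_mem hl, by simpa using hfree⟩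

/-- Each block of answers is preceded by a bit that is `false` for the last block. -/
def decodeCDT : CNF n → Restr n → List Bool → Option (QPath n × List Bool)
  | [], _, _ => none
  | c :: F, ρ, s =>
    match clauseStatus ρ c, s with
    | some true, s => decodeCDT F ρ s
    | none, false :: s => some ((survivors ρ c).zip s, s.drop (survivors ρ c).length)
    | none, true :: s =>
      (decodeCDT (c :: F) (extendR ρ ((survivors ρ c).zip s)) (s.drop (survivors ρ c).length)).map
        fun p => ((survivors ρ c).zip s ++ p.1, p.2)
    | _, _ => none
termination_by F _ s => (s.length, F.length)

theorem CDTFullPath.exists_code {F : CNF n} {ρ : Restr n} {η : QPath n}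
    (h : CDTFullPath F ρ η) :
    ∃ code : List Bool, code.length ≤ 2 * η.length ∧
      ∀ r, decodeCDT F ρ (code ++ r) = some (η, r) := by
  induction h with
  | skip hsat _ ih =>
    obtain ⟨code, hlen, hdec⟩ := ih
    exact ⟨code, hlen, fun r => by rw [decodeCDT.eq_2 _ _ _ _ hsat, hdec]⟩
  | last bs hfree hbs =>
    have := List.length_pos_iff.mpr (survivors_ne_nil hfree)
    refine ⟨false :: bs, ?_, fun r => ?_⟩
    · simp only [List.length_cons, List.length_zip, hbs]; omega
    · rw [List.cons_append, decodeCDT.eq_3 _ _ _ _ hfree, zip_append_right_of_length_le hbs.ge,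
        List.drop_left' hbs]
  | step bs hfree hbs _ ih =>
    obtain ⟨code, hlen, hdec⟩ := ih
    have := List.length_pos_iff.mpr (survivors_ne_nil hfree)
    refine ⟨true :: (bs ++ code), ?_, fun r => ?_⟩
    · simp only [List.length_cons, List.length_append, List.length_zip, hbs] at hlen ⊢; omega
    · rw [List.cons_append, decodeCDT.eq_4 _ _ _ _ hfree, List.append_assoc,
        zip_append_right_of_length_le hbs.ge, List.drop_left' hbs, hdec]
      rfl

open Classical in
/-- `m` is the length of the path to decode, so the code needs no end marker and trailing bits are
ignored; the check `ℓ < η.length` makes the recursion on `m` terminate. -/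
noncomputable def decodeCCDT (ℓ : ℕ) :
    ℕ → List (CNF n) → Restr n → List Bool → Option (QPath n)
  | _, [], _, _ => some []
  | m, F :: Fs, ρ, s =>
    if ∃ η, CDTFullPath F ρ η ∧ ℓ < η.length then
      match decodeCDT F ρ s with
      | some (η, r) =>
        if ℓ < η.length then
          if m ≤ η.length then some (((η.map Prod.fst).take m).zip r)
          else (decodeCCDT ℓ (m - η.length) (F :: Fs) (extendR ρ ((η.map Prod.fst).zip r))
            (r.drop η.length)).map ((η.map Prod.fst).zip r ++ ·)
        else none
      | none => none
    else decodeCCDT ℓ m Fs ρ s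
termination_by m Fs _ _ => (m, Fs.length)

theorem CCDTPath.exists_code {k ℓ : ℕ} (hk : k ≤ ℓ) {Fs : List (CNF n)} {ρ : Restr n}
    {PP : QPath n} (h : CCDTPath ℓ k Fs ρ PP) :
    ∃ code : List Bool, code.length ≤ 3 * PP.length + 4 * ℓ ∧
      ∀ r, decodeCCDT ℓ PP.length Fs ρ (code ++ r) = some PP := by
  induction h with
  | nil => exact ⟨[], by simp, fun r => by rw [decodeCCDT]⟩
  | short hshort _ ih =>
    obtain ⟨code, hlen, hdec⟩ := ih
    refine ⟨code, hlen, fun r => ?_⟩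
    rw [decodeCCDT, if_neg fun ⟨η, hη, hlong⟩ => (hshort η hη).not_gt hlong, hdec]
  | partialSeg η bs hη hlong hshort hbs =>
    obtain ⟨code, hlen, hdec⟩ := hη.exists_code
    have hPP : (((η.map Prod.fst).take bs.length).zip bs).length = bs.length := by simp; omega
    refine ⟨code ++ bs, ?_, fun r => ?_⟩
    · rw [hPP, List.length_append]; omega
    · rw [hPP, decodeCCDT, if_pos ⟨η, hη, hlong⟩, List.append_assoc, hdec]
      simp only [if_pos hlong, if_pos hbs]
      rw [zip_append_right_of_length_le (by simp)]
  | @fullSeg F Fs ρ η bs PP' hη hlong _ hbs _ ih =>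
    obtain ⟨codeη, hlenη, hdecη⟩ := hη.exists_code
    obtain ⟨code, hlen, hdec⟩ := ih
    have hbs' : (η.map Prod.fst).length ≤ bs.length := by simp [hbs]
    refine ⟨codeη ++ bs ++ code, ?_, fun r => ?_⟩
    · simp only [List.length_append, List.length_zip, List.length_map, hbs, min_self]; omega
    · rw [decodeCCDT, if_pos ⟨η, hη, hlong⟩, List.append_assoc, List.append_assoc, hdecη]
      simp only [if_pos hlong, List.length_append, List.length_zip, List.length_map, hbs, min_self,
        zip_append_right_of_length_le hbs']
      rcases eq_or_ne PP' [] with rfl | hPP'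
      · simp only [List.length_nil, Nat.add_zero, le_refl, if_true]
        rw [List.take_of_length_le (by simp), zip_append_right_of_length_le hbs', List.append_nil]
      · rw [if_neg (by simpa using hPP'), Nat.add_sub_cancel_left, List.drop_left' hbs, hdec]
        rfl

end

theorem ccdt_path_count_general {n : ℕ} (k ℓ t : ℕ) (hk : k ≤ ℓ)
    (F : List (CNF n)) :
    Nat.card {PP : QPath n // PP.length = t ∧ CCDTPath ℓ k F (fun _ => none) PP}
      ≤ 16 ^ (t + ℓ) :=
  calc Nat.card {PP : QPath n // PP.length = t ∧ CCDTPath ℓ k F (fun _ => none) PP}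
      ≤ 2 ^ (3 * t + 4 * ℓ) :=
        card_le_two_pow_of_decode _ (decodeCCDT ℓ t F fun _ => none) fun _ ⟨hlen, hPP⟩ =>
          hlen ▸ hPP.exists_code hk
    _ ≤ 2 ^ (4 * (t + ℓ)) := Nat.pow_le_pow_right (by norm_num) (by omega)
    _ = 16 ^ (t + ℓ) := by rw [pow_mul]; norm_num

/-- for an ordered collection F of k-CNFs and ℓ ≥ k, the number of paths of length
exactly t in trees of `CCDT_ℓ(F)` is at most (2^{ℓ+k} · 2^{ℓ+k})^{⌈t/ℓ⌉} ≤ 16^{t+ℓ}. -/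
theorem ccdt_path_count {n : ℕ} (k ℓ t : ℕ) (hk : k ≤ ℓ)
    (F : List (CNF n)) (hwidth : ∀ f ∈ F, ∀ c ∈ f, c.length ≤ k) :
    Nat.card {PP : QPath n // PP.length = t ∧ CCDTPath ℓ k F (fun _ => none) PP}
      ≤ 16 ^ (t + ℓ) :=
  ccdt_path_count_general k ℓ t hk F
end

section
/- Let B ⊆ {0,1,∗}^n be a set of restrictions and suppose there is an injective map encode : B → {0,1,∗}^n × {0,1}^m such that whenever encode(ρ) = (ρ', a), the restriction ρ' extends ρ by exactly t coordinates: supp(ρ) ⊆ supp(ρ') and |supp(ρ') \ supp(ρ)| = t (where supp(σ) = σ^{−1}({0,1})). Then Pr_{ρ←R_p}[ρ ∈ B] ≤ 2^m · (2p/(1−p))^t. -/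
/-! Each extra fixed coordinate trades a factor `p` for a factor `(1 - p) / 2` in the `R_p`-weight,
so a restriction weighs exactly `(2p/(1-p))^t` times any extension of it by `t` coordinates.
Summing over the bad set, injectivity of the encoding lets us replace the encoded restrictions by
all pairs `(ρ', a)`, whose total weight is `2^m`, since the weights of all restrictions sum to `1`. -/

open Finset

/-- The support of a restriction: the coordinates fixed to 0 or 1. -/
def suppR {n : ℕ} (σ : Fin n → Option Bool) : Finset (Fin n) :=
  Finset.univ.filter fun i => σ i ≠ none

namespace Restriction

variable {n : ℕ}

/-- The probability of `σ` under `R_p`. -/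
noncomputable def weight (p : ℝ) (σ : Fin n → Option Bool) : ℝ :=
  ∏ i, if σ i = none then p else (1 - p) / 2

theorem weight_nonneg {p : ℝ} (hp0 : 0 ≤ p) (hp1 : p ≤ 1) (σ : Fin n → Option Bool) :
    0 ≤ weight p σ :=
  prod_nonneg fun i _ => by split_ifs <;> linarith

theorem weight_eq_pow (p : ℝ) (σ : Fin n → Option Bool) :
    weight p σ = p ^ (n - #(suppR σ)) * ((1 - p) / 2) ^ #(suppR σ) := by
  have hcard := card_filter_add_card_filter_not (s := univ) fun i => σ i = none
  rw [card_univ, Fintype.card_fin] at hcard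
  rw [weight, prod_ite, prod_const, prod_const]
  congr 2
  simp only [suppR, ne_eq] at hcard ⊢
  omega

theorem sum_weight (p : ℝ) : ∑ σ : Fin n → Option Bool, weight p σ = 1 := by
  have hcoord : ∑ b : Option Bool, (if b = none then p else (1 - p) / 2) = 1 := by
    simp only [Fintype.sum_option, if_true, Fintype.sum_bool, reduceCtorEq, if_false]
    ring
  simp only [weight, ← Fintype.prod_sum fun _ b => if b = none then p else (1 - p) / 2, hcoord,
    prod_const_one]

theorem weight_eq_mul_of_extends {p : ℝ} (hp : p ≠ 1) {σ σ' : Fin n → Option Bool} {t : ℕ}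
    (hsub : suppR σ ⊆ suppR σ') (hcard : #(suppR σ' \ suppR σ) = t) :
    weight p σ = (2 * p / (1 - p)) ^ t * weight p σ' := by
  have hs' : #(suppR σ') = #(suppR σ) + t := by
    rw [← hcard, card_sdiff_of_subset hsub, Nat.add_sub_cancel' (card_le_card hsub)]
  have hn : #(suppR σ') ≤ n := by simpa using card_le_card (subset_univ (suppR σ'))
  have hr : (2 * p / (1 - p)) ^ t * ((1 - p) / 2) ^ t = p ^ t := by
    rw [← mul_pow]
    congr 1
    field_simp [sub_ne_zero.mpr hp.symm]
  rw [weight_eq_pow, weight_eq_pow, hs', show n - #(suppR σ) = n - (#(suppR σ) + t) + t by omega,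
    pow_add, pow_add, ← hr]
  ring

theorem sum_weight_fst (p : ℝ) (m : ℕ) :
    ∑ x : (Fin n → Option Bool) × (Fin m → Bool), weight p x.1 = 2 ^ m := by
  simp [Fintype.sum_prod_type_right, sum_weight]

end Restriction

open Restriction in
/-- the Razborov encoding argument. If every bad restriction can be injectively
encoded as a restriction extending it by exactly t coordinates plus m auxiliary bits, then the
R_p-probability of the bad set is at most 2^m · (2p/(1−p))^t. -/
theorem encoding_argument {n m t : ℕ} (p : ℝ) (hp0 : 0 ≤ p) (hp1 : p < 1)
    (B : Finset (Fin n → Option Bool))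
    (encode : (Fin n → Option Bool) → (Fin n → Option Bool) × (Fin m → Bool))
    (hinj : Set.InjOn encode B)
    (hext : ∀ ρ ∈ B, suppR ρ ⊆ suppR (encode ρ).1 ∧ (suppR (encode ρ).1 \ suppR ρ).card = t) :
    ∑ ρ ∈ B, (∏ i, (if ρ i = none then p else (1 - p) / 2))
      ≤ 2 ^ m * (2 * p / (1 - p)) ^ t := by
  have hr : 0 ≤ (2 * p / (1 - p)) ^ t := pow_nonneg (div_nonneg (by linarith) (by linarith)) t
  calc ∑ ρ ∈ B, weight p ρ
      = (2 * p / (1 - p)) ^ t * ∑ x ∈ B.image encode, weight p (Prod.fst x) := by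
        rw [sum_image hinj, mul_sum]
        exact sum_congr rfl fun ρ hρ => weight_eq_mul_of_extends hp1.ne (hext ρ hρ).1 (hext ρ hρ).2
    _ ≤ (2 * p / (1 - p)) ^ t * ∑ x : (Fin n → Option Bool) × (Fin m → Bool), weight p x.1 :=
        mul_le_mul_of_nonneg_left (sum_le_sum_of_subset_of_nonneg (subset_univ _)
          fun x _ _ => weight_nonneg hp0 hp1.le x.1) hr
    _ = 2 ^ m * (2 * p / (1 - p)) ^ t := by rw [sum_weight_fst, mul_comm]
end
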